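/- arXiv:2209.02069 — 3 statements merged into one kernel-verified Lean document; each statement's English description precedes it below -/
import Mathlib

section
/- Let G be a finite group and 0 → B₁ → B₂ → B₃ → 0 a short exact sequence of G-modules. Then there is an exact sequence of abelian groups (B₁)_{G,tors} → (B₂)_{G,tors} → (B₃)_{G,tors} → ℚ/ℤ ⊗_ℤ (B₁)_G → ℚ/ℤ ⊗_ℤ (B₂)_G → ℚ/ℤ ⊗_ℤ (B₃)_G → 0, where for a G-module B, B_G denotes the coinvariants and (B)_{G,tors} denotes the torsion subgroup of B_G. -/
/-- The subgroup of a `G`-module `M` generated by the elements `γ • m - m`. -/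
def coinvariantsSub (G M : Type*) [Group G] [AddCommGroup M] [DistribMulAction G M] :
    AddSubgroup M :=
  AddSubgroup.closure {x | ∃ (γ : G) (m : M), x = γ • m - m}

/-- The coinvariants `M_G` of a `G`-module `M`. -/
def Coinvariants (G M : Type*) [Group G] [AddCommGroup M] [DistribMulAction G M] :=
  M ⧸ coinvariantsSub G M

instance (G M : Type*) [Group G] [AddCommGroup M] [DistribMulAction G M] :
    AddCommGroup (Coinvariants G M) :=
  inferInstanceAs (AddCommGroup (_ ⧸ _))

/-- The map on coinvariants induced by a `G`-equivariant additive map. -/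
def coinvariantsMap {G M N : Type*} [Group G] [AddCommGroup M] [DistribMulAction G M]
    [AddCommGroup N] [DistribMulAction G N] (f : M →+ N)
    (hf : ∀ (γ : G) (m : M), f (γ • m) = γ • f m) :
    Coinvariants G M →+ Coinvariants G N :=
  QuotientAddGroup.map _ _ f (by
    refine (AddSubgroup.closure_le _).2 ?_
    rintro x ⟨γ, m, rfl⟩
    simp only [SetLike.mem_coe, AddSubgroup.mem_comap, map_sub, hf]
    exact AddSubgroup.subset_closure ⟨γ, f m, rfl⟩)

/-- The group `ℚ/ℤ`, realized as the quotient of `ℚ` by the subgroup generated by `1`. -/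
abbrev QmodZ : Type := ℚ ⧸ (Submodule.span ℤ {(1 : ℚ)})

/-- The restriction of an additive homomorphism to torsion subgroups. -/
def torsionMap {A B : Type*} [AddCommGroup A] [AddCommGroup B] (f : A →+ B) :
    AddCommGroup.torsion A →+ AddCommGroup.torsion B :=
  AddMonoidHom.codRestrict (f.comp (AddCommGroup.torsion A).subtype) _
    (fun x => f.isOfFinAddOrder x.2)

/-- The map `ℚ/ℤ ⊗_ℤ A → ℚ/ℤ ⊗_ℤ B` induced by an additive homomorphism `f : A → B`. -/
noncomputable def qzTensorMap {A B : Type*} [AddCommGroup A] [AddCommGroup B] (f : A →+ B) :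
    TensorProduct ℤ QmodZ A →ₗ[ℤ] TensorProduct ℤ QmodZ B :=
  LinearMap.lTensor QmodZ f.toIntLinearMap

open TensorProduct Function

namespace SixTermAux

/-- The quotient map `ℚ → ℚ/ℤ`. -/
noncomputable def π : ℚ →ₗ[ℤ] QmodZ := (Submodule.span ℤ {(1 : ℚ)}).mkQ

lemma smul_inv_cast (n m : ℕ) (hm : m ≠ 0) :
    (m : ℤ) • (((n * m : ℕ) : ℚ))⁻¹ = ((n : ℚ))⁻¹ := by
  rcases Nat.eq_zero_or_pos n with rfl | hn
  · simp
  · rw [zsmul_eq_mul]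
    push_cast
    rw [mul_inv, ← mul_assoc, mul_comm (m:ℚ) (n:ℚ)⁻¹, mul_assoc,
      mul_inv_cancel₀ (by exact_mod_cast hm), mul_one]

lemma pi_smul (n m : ℕ) (hm : m ≠ 0) :
    π ((n : ℚ))⁻¹ = (m : ℤ) • π (((n * m : ℕ) : ℚ))⁻¹ := by
  rw [← map_zsmul, smul_inv_cast n m hm]

lemma tmul_torsion_eq_zero {A : Type*} [AddCommGroup A] (n : ℕ) {t : A}
    (ht : IsOfFinAddOrder t) : (π ((n : ℚ))⁻¹) ⊗ₜ[ℤ] t = (0 : QmodZ ⊗[ℤ] A) := by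
  obtain ⟨m, hm, hmt⟩ := isOfFinAddOrder_iff_nsmul_eq_zero.mp ht
  rw [pi_smul n m hm.ne', smul_tmul, natCast_zsmul, hmt, tmul_zero]

lemma split_tmul {A : Type*} [AddCommGroup A] (n m : ℕ) (hn : n ≠ 0) (hm : m ≠ 0)
    (b c : A) :
    (π (((n * m : ℕ) : ℚ))⁻¹) ⊗ₜ[ℤ] ((m : ℤ) • b + (n : ℤ) • c)
      = (π ((n : ℚ))⁻¹) ⊗ₜ[ℤ] b + (π ((m : ℚ))⁻¹) ⊗ₜ[ℤ] c := by
  rw [tmul_add, ← smul_tmul, ← smul_tmul, ← map_zsmul, ← map_zsmul,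
    smul_inv_cast n m hm, mul_comm n m, smul_inv_cast m n hn]

lemma exists_repr {A : Type*} [AddCommGroup A] (ξ : QmodZ ⊗[ℤ] A) :
    ∃ (n : ℕ) (b : A), 0 < n ∧ ξ = (π ((n : ℚ))⁻¹) ⊗ₜ[ℤ] b := by
  induction ξ using TensorProduct.induction_on with
  | zero => exact ⟨1, 0, one_pos, by simp⟩
  | tmul q b =>
      obtain ⟨r, rfl⟩ := Submodule.mkQ_surjective _ q
      refine ⟨r.den, r.num • b, r.den_pos, ?_⟩
      have hr : r = r.num • ((r.den : ℚ))⁻¹ := by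
        rw [zsmul_eq_mul, ← div_eq_mul_inv, Rat.num_div_den]
      conv_lhs => rw [hr]
      rw [map_zsmul, smul_tmul]
      rfl
  | add x y hx hy =>
      obtain ⟨n, b, hn, rfl⟩ := hx
      obtain ⟨m, c, hm, rfl⟩ := hy
      exact ⟨n * m, (m : ℤ) • b + (n : ℤ) • c, Nat.mul_pos hn hm,
        (split_tmul n m hn.ne' hm.ne' b c).symm⟩

end SixTermAux
namespace SixTermAux

instance qTensorLocalized {A : Type*} [AddCommGroup A] :
    IsLocalizedModule (nonZeroDivisors ℤ) (TensorProduct.mk ℤ ℚ A 1) :=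
  (isLocalizedModule_iff_isBaseChange (nonZeroDivisors ℤ) ℚ _).mpr
    (TensorProduct.isBaseChange ℤ A ℚ)

lemma torsion_of_one_tmul_eq_zero {A : Type*} [AddCommGroup A] {b : A}
    (h : (1 : ℚ) ⊗ₜ[ℤ] b = (0 : ℚ ⊗[ℤ] A)) : IsOfFinAddOrder b := by
  obtain ⟨s, hs⟩ := (IsLocalizedModule.eq_zero_iff (nonZeroDivisors ℤ)
    (TensorProduct.mk ℤ ℚ A 1)).mp h
  have hs0 : (s : ℤ) ≠ 0 := nonZeroDivisors.coe_ne_zero s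
  rw [isOfFinAddOrder_iff_nsmul_eq_zero]
  refine ⟨(s : ℤ).natAbs, Int.natAbs_pos.mpr hs0, ?_⟩
  rcases Int.natAbs_eq (s : ℤ) with he | he
  · rw [← natCast_zsmul, ← he]; exact hs
  · rw [← natCast_zsmul, ← neg_neg (((s:ℤ).natAbs : ℤ)), ← he, neg_zsmul]
    rw [show (s : ℤ) • b = 0 from hs, neg_zero]

lemma exists_of_tmul_eq_zero {A : Type*} [AddCommGroup A] {n : ℕ} (hn : 0 < n) {b : A}
    (h : (π ((n : ℚ))⁻¹) ⊗ₜ[ℤ] b = (0 : QmodZ ⊗[ℤ] A)) :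
    ∃ c : A, IsOfFinAddOrder (b - (n : ℤ) • c) := by
  have hexact : Function.Exact (LinearMap.rTensor A (LinearMap.toSpanSingleton ℤ ℚ 1))
      (LinearMap.rTensor A (Submodule.span ℤ {(1 : ℚ)}).mkQ) := by
    refine rTensor_exact A ?_ (Submodule.mkQ_surjective _)
    rw [LinearMap.exact_iff, Submodule.ker_mkQ, LinearMap.span_singleton_eq_range]
  have h0 : (LinearMap.rTensor A (Submodule.span ℤ {(1 : ℚ)}).mkQ)
      (((n : ℚ))⁻¹ ⊗ₜ[ℤ] b) = 0 := by
    rw [LinearMap.rTensor_tmul]; exact h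
  obtain ⟨ζ, hζ⟩ := (hexact _).mp h0
  set c := TensorProduct.lid ℤ A ζ with hc
  have hζ' : ζ = (1 : ℤ) ⊗ₜ[ℤ] c := by
    rw [hc, ← TensorProduct.lid_symm_apply, LinearEquiv.symm_apply_apply]
  rw [hζ', LinearMap.rTensor_tmul] at hζ
  have h1 : (LinearMap.toSpanSingleton ℤ ℚ 1) 1 = (1 : ℚ) := by
    simp [LinearMap.toSpanSingleton_apply]
  rw [h1] at hζ
  refine ⟨c, torsion_of_one_tmul_eq_zero ?_⟩
  have hns : (n : ℤ) • (((n : ℚ))⁻¹ ⊗ₜ[ℤ] b) = (1 : ℚ) ⊗ₜ[ℤ] b := by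
    rw [TensorProduct.smul_tmul', zsmul_eq_mul]
    push_cast
    rw [mul_inv_cancel₀ (by exact_mod_cast hn.ne' : (n : ℚ) ≠ 0)]
  calc (1 : ℚ) ⊗ₜ[ℤ] (b - (n : ℤ) • c)
      = (1 : ℚ) ⊗ₜ[ℤ] b - (n : ℤ) • ((1 : ℚ) ⊗ₜ[ℤ] c) := by
        rw [TensorProduct.tmul_sub, TensorProduct.tmul_smul]
    _ = (1 : ℚ) ⊗ₜ[ℤ] b - (1 : ℚ) ⊗ₜ[ℤ] b := by rw [hζ, hns]
    _ = 0 := sub_self _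

end SixTermAux
namespace SixTermAux

variable {A₁ A₂ A₃ : Type*} [AddCommGroup A₁] [AddCommGroup A₂] [AddCommGroup A₃]

lemma delta_exists (f : A₁ →+ A₂) (g : A₂ →+ A₃) (hg : Function.Surjective g)
    (hfg : Function.Exact f g) (x : AddCommGroup.torsion A₃) :
    ∃ (n : ℕ) (a : A₂) (b : A₁), 0 < n ∧ g a = (x : A₃) ∧ f b = (n : ℤ) • a := by
  obtain ⟨n, hn, hnx⟩ := isOfFinAddOrder_iff_nsmul_eq_zero.mp x.2
  obtain ⟨a, ha⟩ := hg (x : A₃)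
  have : g ((n : ℤ) • a) = 0 := by
    rw [map_zsmul, ha, natCast_zsmul, hnx]
  obtain ⟨b, hb⟩ := (hfg _).mp this
  exact ⟨n, a, b, hn, ha, hb⟩

/-- The underlying function of the connecting homomorphism. -/
noncomputable def deltaFun (f : A₁ →+ A₂) (g : A₂ →+ A₃) (hg : Function.Surjective g)
    (hfg : Function.Exact f g) (x : AddCommGroup.torsion A₃) : QmodZ ⊗[ℤ] A₁ :=
  (π (((delta_exists f g hg hfg x).choose : ℚ))⁻¹) ⊗ₜ[ℤ]
    (delta_exists f g hg hfg x).choose_spec.choose_spec.choose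

lemma delta_welldef (f : A₁ →+ A₂) (g : A₂ →+ A₃) (hfg : Function.Exact f g)
    (hK : ∀ a, f a = 0 → IsOfFinAddOrder a)
    {x : A₃} {n n' : ℕ} {a a' : A₂} {b b' : A₁}
    (hn : 0 < n) (hn' : 0 < n') (ha : g a = x) (ha' : g a' = x)
    (hb : f b = (n : ℤ) • a) (hb' : f b' = (n' : ℤ) • a') :
    (π ((n : ℚ))⁻¹) ⊗ₜ[ℤ] b = (π ((n' : ℚ))⁻¹) ⊗ₜ[ℤ] b' := by
  have hc : g (a - a') = 0 := by rw [map_sub, ha, ha', sub_self]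
  obtain ⟨c, hcc⟩ := (hfg _).mp hc
  have key : f ((n' : ℤ) • b - (n : ℤ) • b' - ((n : ℤ) * (n' : ℤ)) • c) = 0 := by
    rw [map_sub, map_sub, map_zsmul, map_zsmul, map_zsmul, hb, hb', hcc]
    simp only [mul_smul, smul_sub]
    rw [smul_comm (n' : ℤ) (n : ℤ) a]
    abel
  have ht : IsOfFinAddOrder ((n' : ℤ) • b - (n : ℤ) • b' - ((n : ℤ) * (n' : ℤ)) • c) := hK _ key
  have hsplit : (π (((n * n' : ℕ) : ℚ))⁻¹) ⊗ₜ[ℤ] ((n' : ℤ) • b - (n : ℤ) • b') = 0 := by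
    have e1 : ((n' : ℤ) • b - (n : ℤ) • b')
        = ((n' : ℤ) • b - (n : ℤ) • b' - ((n : ℤ) * (n' : ℤ)) • c)
          + ((n : ℤ) * (n' : ℤ)) • c := by abel
    rw [e1, TensorProduct.tmul_add, tmul_torsion_eq_zero _ ht, zero_add,
      ← TensorProduct.smul_tmul, ← map_zsmul]
    have : ((n : ℤ) * (n' : ℤ)) • (((n * n' : ℕ) : ℚ))⁻¹ = (1 : ℚ) := by
      rw [zsmul_eq_mul]
      push_cast
      rw [mul_inv_cancel₀]
      positivity
    rw [this]
    have hπ1 : π (1 : ℚ) = 0 := by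
      rw [π, Submodule.mkQ_apply, Submodule.Quotient.mk_eq_zero]
      exact Submodule.mem_span_singleton_self 1
    rw [hπ1, TensorProduct.zero_tmul]
  have e2 : (π ((n : ℚ))⁻¹) ⊗ₜ[ℤ] b = (π (((n * n' : ℕ) : ℚ))⁻¹) ⊗ₜ[ℤ] ((n' : ℤ) • b) := by
    rw [pi_smul n n' hn'.ne', TensorProduct.smul_tmul]
  have e3 : (π ((n' : ℚ))⁻¹) ⊗ₜ[ℤ] b' = (π (((n * n' : ℕ) : ℚ))⁻¹) ⊗ₜ[ℤ] ((n : ℤ) • b') := by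
    rw [pi_smul n' n hn.ne', TensorProduct.smul_tmul, mul_comm n' n]
  rw [e2, e3, ← sub_eq_zero, ← TensorProduct.tmul_sub]
  exact hsplit

lemma deltaFun_spec (f : A₁ →+ A₂) (g : A₂ →+ A₃) (hg : Function.Surjective g)
    (hfg : Function.Exact f g) (hK : ∀ a, f a = 0 → IsOfFinAddOrder a)
    (x : AddCommGroup.torsion A₃) {n : ℕ} {a : A₂} {b : A₁}
    (hn : 0 < n) (ha : g a = (x : A₃)) (hb : f b = (n : ℤ) • a) :
    deltaFun f g hg hfg x = (π ((n : ℚ))⁻¹) ⊗ₜ[ℤ] b := by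
  obtain ⟨hn', ha', hb'⟩ := (delta_exists f g hg hfg x).choose_spec.choose_spec.choose_spec
  exact delta_welldef f g hfg hK hn' hn ha' ha hb' hb

/-- The connecting homomorphism. -/
noncomputable def delta (f : A₁ →+ A₂) (g : A₂ →+ A₃) (hg : Function.Surjective g)
    (hfg : Function.Exact f g) (hK : ∀ a, f a = 0 → IsOfFinAddOrder a) :
    AddCommGroup.torsion A₃ →+ QmodZ ⊗[ℤ] A₁ where
  toFun := deltaFun f g hg hfg
  map_zero' := by
    rw [deltaFun_spec f g hg hfg hK 0 one_pos (map_zero g)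
      (by rw [map_zero, smul_zero] : f 0 = (1 : ℤ) • (0 : A₂))]
    simp
  map_add' := by
    intro x y
    show deltaFun f g hg hfg (x + y) = deltaFun f g hg hfg x + deltaFun f g hg hfg y
    obtain ⟨n, a, b, hn, ha, hb⟩ := delta_exists f g hg hfg x
    obtain ⟨m, a', b', hm, ha', hb'⟩ := delta_exists f g hg hfg y
    have hxy : g (a + a') = ((x + y : AddCommGroup.torsion A₃) : A₃) := by
      rw [map_add, ha, ha']; rfl
    have hfb : f ((m : ℤ) • b + (n : ℤ) • b') = ((n * m : ℕ) : ℤ) • (a + a') := by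
      rw [map_add, map_zsmul, map_zsmul, hb, hb', smul_add, smul_smul, smul_smul]
      push_cast
      rw [mul_comm (m : ℤ) (n : ℤ)]
    rw [deltaFun_spec f g hg hfg hK (x + y) (Nat.mul_pos hn hm) hxy hfb,
      deltaFun_spec f g hg hfg hK x hn ha hb,
      deltaFun_spec f g hg hfg hK y hm ha' hb',
      split_tmul n m hn.ne' hm.ne']

end SixTermAux
namespace SixTermAux

variable {A₁ A₂ A₃ : Type*} [AddCommGroup A₁] [AddCommGroup A₂] [AddCommGroup A₃]

lemma delta_spec (f : A₁ →+ A₂) (g : A₂ →+ A₃) (hg : Function.Surjective g)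
    (hfg : Function.Exact f g) (hK : ∀ a, f a = 0 → IsOfFinAddOrder a)
    (x : AddCommGroup.torsion A₃) {n : ℕ} {a : A₂} {b : A₁}
    (hn : 0 < n) (ha : g a = (x : A₃)) (hb : f b = (n : ℤ) • a) :
    delta f g hg hfg hK x = (π ((n : ℚ))⁻¹) ⊗ₜ[ℤ] b :=
  deltaFun_spec f g hg hfg hK x hn ha hb

lemma torsionMap_coe {A B : Type*} [AddCommGroup A] [AddCommGroup B] (f : A →+ B)
    (x : AddCommGroup.torsion A) : ((torsionMap f x : AddCommGroup.torsion B) : B) = f x := rfl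

theorem six_term_ab (f : A₁ →+ A₂) (g : A₂ →+ A₃) (hg : Function.Surjective g)
    (hfg : Function.Exact f g) (hK : ∀ a, f a = 0 → IsOfFinAddOrder a) :
    ∃ δ : AddCommGroup.torsion A₃ →+ TensorProduct ℤ QmodZ A₁,
      Function.Exact (torsionMap f) (torsionMap g) ∧
      Function.Exact (torsionMap g) δ ∧
      Function.Exact δ (qzTensorMap f) ∧
      Function.Exact (qzTensorMap f) (qzTensorMap g) ∧
      Function.Surjective (qzTensorMap g) := by
  have hfg' : Function.Exact f.toIntLinearMap g.toIntLinearMap := hfg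
  have hg' : Function.Surjective g.toIntLinearMap := hg
  refine ⟨delta f g hg hfg hK, ?_, ?_, ?_,
    lTensor_exact QmodZ hfg' hg',
    LinearMap.lTensor_surjective QmodZ hg'⟩
  · -- exactness at torsion A₂
    intro y
    constructor
    · intro h0
      have hgy : g (y : A₂) = 0 := by
        have := congrArg (Subtype.val) h0
        simpa [torsionMap_coe] using this
      obtain ⟨b, hb⟩ := (hfg _).mp hgy
      obtain ⟨n, hn, hny⟩ := isOfFinAddOrder_iff_nsmul_eq_zero.mp y.2
      have hfb : f (n • b) = 0 := by
        rw [map_nsmul, hb, hny]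
      obtain ⟨m, hm, hmb⟩ := isOfFinAddOrder_iff_nsmul_eq_zero.mp (hK _ hfb)
      have hbt : IsOfFinAddOrder b := by
        rw [isOfFinAddOrder_iff_nsmul_eq_zero]
        exact ⟨m * n, Nat.mul_pos hm hn, by rw [mul_smul]; exact hmb⟩
      exact ⟨⟨b, hbt⟩, Subtype.ext hb⟩
    · rintro ⟨x, rfl⟩
      exact Subtype.ext (hfg.apply_apply_eq_zero (x : A₁))
  · -- exactness at torsion A₃
    intro x
    constructor
    · intro h0
      obtain ⟨n, a, b, hn, ha, hb⟩ := delta_exists f g hg hfg x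
      have hδ := delta_spec f g hg hfg hK x hn ha hb
      rw [h0] at hδ
      obtain ⟨c, hc⟩ := exists_of_tmul_eq_zero hn hδ.symm
      obtain ⟨m, hm, hmt⟩ := isOfFinAddOrder_iff_nsmul_eq_zero.mp hc
      have hft : f (b - (n : ℤ) • c) = (n : ℤ) • (a - f c) := by
        rw [map_sub, map_zsmul, hb, smul_sub]
      have hator : IsOfFinAddOrder (a - f c) := by
        rw [isOfFinAddOrder_iff_nsmul_eq_zero]
        refine ⟨m * n, Nat.mul_pos hm hn, ?_⟩
        rw [← smul_smul, ← natCast_zsmul (n := n), ← hft, ← map_nsmul, hmt, map_zero]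
      refine ⟨⟨a - f c, hator⟩, Subtype.ext ?_⟩
      rw [torsionMap_coe, map_sub, ha, hfg.apply_apply_eq_zero, sub_zero]
    · rintro ⟨y, rfl⟩
      obtain ⟨n, hn, hny⟩ := isOfFinAddOrder_iff_nsmul_eq_zero.mp y.2
      have ha : g (y : A₂) = ((torsionMap g y : AddCommGroup.torsion A₃) : A₃) := rfl
      have hb : f 0 = (n : ℤ) • (y : A₂) := by
        rw [map_zero, natCast_zsmul, hny]
      rw [delta_spec f g hg hfg hK _ hn ha hb, TensorProduct.tmul_zero]
  · -- exactness at QmodZ ⊗ A₁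
    intro ξ
    constructor
    · intro h0
      obtain ⟨n, b, hn, rfl⟩ := exists_repr ξ
      have h2 : (π ((n : ℚ))⁻¹) ⊗ₜ[ℤ] (f b) = (0 : QmodZ ⊗[ℤ] A₂) := by
        have : qzTensorMap f ((π ((n : ℚ))⁻¹) ⊗ₜ[ℤ] b)
            = (π ((n : ℚ))⁻¹) ⊗ₜ[ℤ] (f b) := by
          exact LinearMap.lTensor_tmul _ _ _ _
        rw [← this, h0]
      obtain ⟨c, hc⟩ := exists_of_tmul_eq_zero hn h2
      obtain ⟨m, hm, hmt⟩ := isOfFinAddOrder_iff_nsmul_eq_zero.mp hc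
      have hnm : ((n * m : ℕ) : ℤ) • c = f ((m : ℤ) • b) := by
        have h3 : (m : ℤ) • f b = (m : ℤ) • (n : ℤ) • c := by
          have h4 : (m : ℤ) • (f b - (n : ℤ) • c) = 0 := by
            rw [natCast_zsmul]; exact hmt
          rwa [smul_sub, sub_eq_zero] at h4
        rw [map_zsmul, h3, smul_smul, mul_comm (m : ℤ) (n : ℤ)]
        push_cast
        rfl
      have hgc : IsOfFinAddOrder (g c) := by
        rw [isOfFinAddOrder_iff_nsmul_eq_zero]
        refine ⟨n * m, Nat.mul_pos hn hm, ?_⟩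
        rw [← natCast_zsmul, ← map_zsmul, hnm]
        exact hfg.apply_apply_eq_zero _
      refine ⟨⟨g c, hgc⟩, ?_⟩
      have ha : g c = ((⟨g c, hgc⟩ : AddCommGroup.torsion A₃) : A₃) := rfl
      have hb2 : f ((m : ℤ) • b) = ((n * m : ℕ) : ℤ) • c := hnm.symm
      rw [delta_spec f g hg hfg hK _ (Nat.mul_pos hn hm) ha hb2,
        pi_smul n m hm.ne', TensorProduct.smul_tmul]
    · rintro ⟨x, rfl⟩
      obtain ⟨n, a, b, hn, ha, hb⟩ := delta_exists f g hg hfg x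
      rw [delta_spec f g hg hfg hK x hn ha hb]
      have : qzTensorMap f ((π ((n : ℚ))⁻¹) ⊗ₜ[ℤ] b)
          = (π ((n : ℚ))⁻¹) ⊗ₜ[ℤ] (f b) := by exact LinearMap.lTensor_tmul _ _ _ _
      rw [this, hb, ← TensorProduct.smul_tmul, ← map_zsmul]
      have h1 : (n : ℤ) • ((n : ℚ))⁻¹ = (1 : ℚ) := by
        rw [zsmul_eq_mul]
        push_cast
        rw [mul_inv_cancel₀ (by exact_mod_cast hn.ne' : (n : ℚ) ≠ 0)]
      have hπ1 : π (1 : ℚ) = 0 := by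
        rw [π, Submodule.mkQ_apply, Submodule.Quotient.mk_eq_zero]
        exact Submodule.mem_span_singleton_self 1
      rw [h1, hπ1, TensorProduct.zero_tmul]

end SixTermAux
namespace SixTermAux

section Coinv

variable {G : Type*} [Group G] [Fintype G]

/-- The norm map `m ↦ ∑ γ • m`. -/
def normHom (G : Type*) [Group G] [Fintype G] (M : Type*) [AddCommGroup M]
    [DistribMulAction G M] : M →+ M where
  toFun m := ∑ γ : G, γ • m
  map_zero' := by simp
  map_add' x y := by
    simp [smul_add, Finset.sum_add_distrib]

lemma normHom_generator {M : Type*} [AddCommGroup M] [DistribMulAction G M]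
    (γ₀ : G) (m : M) : normHom G M (γ₀ • m - m) = 0 := by
  have h1 : normHom G M (γ₀ • m) = normHom G M m := by
    show ∑ γ : G, γ • γ₀ • m = ∑ γ : G, γ • m
    rw [← Equiv.sum_comp (Equiv.mulRight γ₀) (fun γ => γ • m)]
    refine Finset.sum_congr rfl fun γ _ => ?_
    rw [Equiv.coe_mulRight, mul_smul]
  rw [map_sub, h1, sub_self]

lemma normHom_eq_zero_of_mem {M : Type*} [AddCommGroup M] [DistribMulAction G M]
    {m : M} (hm : m ∈ coinvariantsSub G M) : normHom G M m = 0 := by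
  have : coinvariantsSub G M ≤ (normHom G M).ker := by
    rw [coinvariantsSub, AddSubgroup.closure_le]
    rintro x ⟨γ, m', rfl⟩
    exact normHom_generator γ m'
  exact this hm

lemma normHom_sub_card_smul_mem {M : Type*} [AddCommGroup M] [DistribMulAction G M]
    (m : M) : normHom G M m - (Fintype.card G) • m ∈ coinvariantsSub G M := by
  have : normHom G M m - (Fintype.card G) • m = ∑ γ : G, (γ • m - m) := by
    rw [Finset.sum_sub_distrib]
    show normHom G M m - _ = normHom G M m - _
    rw [Finset.sum_const, Finset.card_univ]
  rw [this]
  exact AddSubgroup.sum_mem _ fun γ _ => AddSubgroup.subset_closure ⟨γ, m, rfl⟩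

end Coinv

end SixTermAux
set_option linter.unusedSectionVars false

namespace SixTermAux

section Main

variable {G : Type*} [Group G] [Fintype G] {B₁ B₂ B₃ : Type*}
  [AddCommGroup B₁] [DistribMulAction G B₁]
  [AddCommGroup B₂] [DistribMulAction G B₂]
  [AddCommGroup B₃] [DistribMulAction G B₃]

lemma coinv_mk_surjective {M : Type*} [AddCommGroup M] [DistribMulAction G M] :
    Function.Surjective (fun m : M => (QuotientAddGroup.mk m : Coinvariants G M)) :=
  fun y => QuotientAddGroup.mk_surjective y

lemma coinvariantsMap_mk {M N : Type*} [AddCommGroup M] [DistribMulAction G M]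
    [AddCommGroup N] [DistribMulAction G N] (f : M →+ N)
    (hf : ∀ (γ : G) (m : M), f (γ • m) = γ • f m) (m : M) :
    coinvariantsMap f hf (QuotientAddGroup.mk m : Coinvariants G M)
      = (QuotientAddGroup.mk (f m) : Coinvariants G N) := rfl

variable (i : B₁ →+ B₂) (j : B₂ →+ B₃)
  (hiG : ∀ (γ : G) (m : B₁), i (γ • m) = γ • i m)
  (hjG : ∀ (γ : G) (m : B₂), j (γ • m) = γ • j m)

lemma coinv_surjective (hj : Function.Surjective j) :
    Function.Surjective (coinvariantsMap j hjG) := by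
  intro y
  obtain ⟨b₃, rfl⟩ := coinv_mk_surjective (G := G) y
  obtain ⟨b₂, rfl⟩ := hj b₃
  exact ⟨QuotientAddGroup.mk b₂, rfl⟩

include hjG in
lemma coinv_sub_le (hj : Function.Surjective j) :
    coinvariantsSub G B₃ ≤ AddSubgroup.map j (coinvariantsSub G B₂) := by
  rw [coinvariantsSub, AddSubgroup.closure_le]
  rintro x ⟨γ, m, rfl⟩
  obtain ⟨b, rfl⟩ := hj m
  exact ⟨γ • b - b, AddSubgroup.subset_closure ⟨γ, b, rfl⟩, by rw [map_sub, hjG]⟩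

lemma coinv_exact (hj : Function.Surjective j) (hex : Function.Exact i j) :
    Function.Exact (coinvariantsMap i hiG) (coinvariantsMap j hjG) := by
  intro y
  constructor
  · intro h0
    obtain ⟨b₂, rfl⟩ := coinv_mk_surjective (G := G) y
    rw [coinvariantsMap_mk] at h0
    replace h0 := (QuotientAddGroup.eq_zero_iff (N := coinvariantsSub G B₃) (j b₂)).mp h0
    obtain ⟨n₂, hn₂, hjn₂⟩ := coinv_sub_le j hjG hj h0
    have : j (b₂ - n₂) = 0 := by rw [map_sub, hjn₂, sub_self]
    obtain ⟨b₁, hb₁⟩ := (hex _).mp this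
    refine ⟨QuotientAddGroup.mk b₁, ?_⟩
    rw [coinvariantsMap_mk, hb₁]
    rw [sub_eq_add_neg]
    rw [show (QuotientAddGroup.mk (b₂ + -n₂) : Coinvariants G B₂)
      = QuotientAddGroup.mk b₂ + QuotientAddGroup.mk (-n₂) from rfl]
    rw [show (QuotientAddGroup.mk (-n₂) : Coinvariants G B₂) = 0 from
      (QuotientAddGroup.eq_zero_iff _).mpr (neg_mem hn₂), add_zero]
  · rintro ⟨x, rfl⟩
    obtain ⟨b₁, rfl⟩ := coinv_mk_surjective (G := G) x
    rw [coinvariantsMap_mk, coinvariantsMap_mk]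
    have : j (i b₁) = 0 := (hex _).mpr ⟨b₁, rfl⟩
    rw [this]
    rfl

lemma coinv_ker_torsion (hi : Function.Injective i) :
    ∀ x : Coinvariants G B₁, coinvariantsMap i hiG x = 0 → IsOfFinAddOrder x := by
  intro x hx
  obtain ⟨b₁, rfl⟩ := coinv_mk_surjective (G := G) x
  rw [coinvariantsMap_mk] at hx
  replace hx := (QuotientAddGroup.eq_zero_iff (N := coinvariantsSub G B₂) (i b₁)).mp hx
  have hnorm : i (normHom G B₁ b₁) = 0 := by
    have : i (normHom G B₁ b₁) = normHom G B₂ (i b₁) := by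
      show i (∑ γ : G, γ • b₁) = ∑ γ : G, γ • (i b₁)
      rw [map_sum]
      exact Finset.sum_congr rfl fun γ _ => hiG γ b₁
    rw [this]
    exact normHom_eq_zero_of_mem hx
  have hν : normHom G B₁ b₁ = 0 := hi (by rw [hnorm, map_zero])
  have hcard : (Fintype.card G) • b₁ ∈ coinvariantsSub G B₁ := by
    have := neg_mem (normHom_sub_card_smul_mem (G := G) b₁)
    rw [neg_sub, hν, sub_zero] at this
    exact this
  refine isOfFinAddOrder_iff_nsmul_eq_zero.mpr ?_
  refine ⟨Fintype.card G, Fintype.card_pos, ?_⟩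
  refine (show (Fintype.card G) • (QuotientAddGroup.mk b₁ : Coinvariants G B₁)
    = QuotientAddGroup.mk ((Fintype.card G) • b₁) from rfl).trans ?_
  exact (QuotientAddGroup.eq_zero_iff (N := coinvariantsSub G B₁) _).mpr hcard

end Main

end SixTermAux
/-- Let `G` be a finite group and `0 → B₁ → B₂ → B₃ → 0` a short exact
sequence of `G`-modules. Then there is an exact sequence of abelian groups
`(B₁)_{G,tors} → (B₂)_{G,tors} → (B₃)_{G,tors} →^δ ℚ/ℤ ⊗ (B₁)_G → ℚ/ℤ ⊗ (B₂)_G →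
ℚ/ℤ ⊗ (B₃)_G → 0`, where all maps except the connecting homomorphism `δ` are induced
by functoriality of coinvariants, torsion subgroups, and tensor products. -/
theorem six_term_exact_sequence_of_coinvariants {G : Type*} [Group G] [Finite G]
    {B₁ B₂ B₃ : Type*}
    [AddCommGroup B₁] [DistribMulAction G B₁]
    [AddCommGroup B₂] [DistribMulAction G B₂]
    [AddCommGroup B₃] [DistribMulAction G B₃]
    (i : B₁ →+ B₂) (j : B₂ →+ B₃)
    (hiG : ∀ (γ : G) (m : B₁), i (γ • m) = γ • i m)
    (hjG : ∀ (γ : G) (m : B₂), j (γ • m) = γ • j m)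
    (hi : Function.Injective i) (hj : Function.Surjective j)
    (hex : Function.Exact i j) :
    ∃ δ : AddCommGroup.torsion (Coinvariants G B₃) →+
        TensorProduct ℤ QmodZ (Coinvariants G B₁),
      Function.Exact (torsionMap (coinvariantsMap i hiG)) (torsionMap (coinvariantsMap j hjG)) ∧
      Function.Exact (torsionMap (coinvariantsMap j hjG)) δ ∧
      Function.Exact δ (qzTensorMap (coinvariantsMap i hiG)) ∧
      Function.Exact (qzTensorMap (coinvariantsMap i hiG)) (qzTensorMap (coinvariantsMap j hjG)) ∧
      Function.Surjective (qzTensorMap (coinvariantsMap j hjG)) := by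
  cases nonempty_fintype G
  exact SixTermAux.six_term_ab (coinvariantsMap i hiG) (coinvariantsMap j hjG)
    (SixTermAux.coinv_surjective j hjG hj)
    (SixTermAux.coinv_exact i j hiG hjG hj hex)
    (SixTermAux.coinv_ker_torsion i hiG hi)
end

section
/- Let G be a finite group, H ≤ G a subgroup, and 0 → M_C → M → M̄ → 0 a short exact sequence of G-modules such that M̄ is finite and the coinvariants satisfy (M_C)_H = (M_C)_G (i.e., the natural surjection (M_C)_H → (M_C)_G is an isomorphism). Then the natural map on torsion subgroups of coinvariants (M)_{H,tors} → (M)_{G,tors} is surjective. -/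
/-- The subgroup of `M` generated by the `γ • m - m` for `γ` in a subgroup `H ≤ G`. -/
def coinvariantsSubOf {G : Type*} [Group G] (H : Subgroup G) (M : Type*)
    [AddCommGroup M] [DistribMulAction G M] : AddSubgroup M :=
  AddSubgroup.closure {x | ∃ (γ : H) (m : M), x = (γ : G) • m - m}

/-- The natural homomorphism `M_H → M_G` on coinvariants, induced by the identity of `M`. -/
def coinvariantsOfLe {G : Type*} [Group G] (H : Subgroup G) (M : Type*)
    [AddCommGroup M] [DistribMulAction G M] :
    M ⧸ coinvariantsSubOf H M →+ Coinvariants G M :=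
  QuotientAddGroup.map _ _ (AddMonoidHom.id M) (by
    refine (AddSubgroup.closure_le _).2 ?_
    rintro x ⟨γ, m, rfl⟩
    exact AddSubgroup.subset_closure ⟨(γ : G), m, rfl⟩)

/-- Let `G` be a finite group, `H ≤ G` a subgroup, and
`0 → M_C → M → M̄ → 0` a short exact sequence of `G`-modules with `M̄` finite, such
that the natural surjection `(M_C)_H → (M_C)_G` on coinvariants is injective (hence an
isomorphism). Then the natural map on torsion subgroups of coinvariants
`(M)_{H,tors} → (M)_{G,tors}` is surjective: every torsion element of `M_G` is the
image of a torsion element of `M_H`. -/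
theorem torsion_coinvariants_map_surjective {G : Type*} [Group G] [Finite G]
    (H : Subgroup G) {MC M Mbar : Type*}
    [AddCommGroup MC] [DistribMulAction G MC]
    [AddCommGroup M] [DistribMulAction G M]
    [AddCommGroup Mbar] [DistribMulAction G Mbar] [Finite Mbar]
    (i : MC →+ M) (j : M →+ Mbar)
    (hiG : ∀ (γ : G) (m : MC), i (γ • m) = γ • i m)
    (hjG : ∀ (γ : G) (m : M), j (γ • m) = γ • j m)
    (hi : Function.Injective i) (hj : Function.Surjective j)
    (hex : Function.Exact i j)
    (hiso : Function.Injective (coinvariantsOfLe H MC)) :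
    ∀ x : Coinvariants G M, IsOfFinAddOrder x →
      ∃ y : M ⧸ coinvariantsSubOf H M,
        IsOfFinAddOrder y ∧ coinvariantsOfLe H M y = x := by
    classical
  have _inst : Fintype G := Fintype.ofFinite G
  -- Key claim: every element of `coinvariantsSub G M` has torsion class in `M ⧸ coinvariantsSubOf H M`.
  set SH := coinvariantsSubOf H M with hSH
  have key : ∀ k ∈ coinvariantsSub G M,
      IsOfFinAddOrder ((QuotientAddGroup.mk k : M ⧸ SH)) := by
    have hgen : ∀ γ : G, ∀ m : M,
        IsOfFinAddOrder ((QuotientAddGroup.mk (γ • m - m) : M ⧸ SH)) := by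
      intro γ m
      set N := Nat.card Mbar with hNdef
      have hN : 0 < N := Nat.card_pos
      have hjk : j (N • (γ • m - m)) = 0 := by
        rw [map_nsmul]
        exact card_nsmul_eq_zero'
      obtain ⟨c, hc⟩ := (hex _).1 hjk
      have hd : i c = γ • (N • m) - N • m := by
        rw [hc, smul_sub]
        congr 1
        exact ((DistribMulAction.toAddMonoidHom M γ).map_nsmul N m).symm
      -- the norm of c is zero
      have hczero : (∑ g : G, g • c) = 0 := by
        apply hi
        rw [map_sum, map_zero]
        calc ∑ g : G, i (g • c) = ∑ g : G, ((g * γ) • (N • m) - g • (N • m)) := by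
              refine Finset.sum_congr rfl fun g _ => ?_
              rw [hiG, hd, smul_sub, smul_smul]
            _ = (∑ g : G, (g * γ) • (N • m)) - ∑ g : G, g • (N • m) :=
              Finset.sum_sub_distrib _ _
            _ = 0 := by
              rw [sub_eq_zero]
              exact Fintype.sum_equiv (Equiv.mulRight γ)
                (fun g => (g * γ) • (N • m)) (fun g => g • (N • m)) (fun g => rfl)
      -- hence `|G| • c` lies in `coinvariantsSub G MC`
      have hGc : (Nat.card G) • c ∈ coinvariantsSub G MC := by
        have hsum : (∑ g : G, (g • c - c)) = (∑ g : G, g • c) - (Nat.card G) • c := by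
          rw [Finset.sum_sub_distrib, Finset.sum_const, Finset.card_univ,
            Nat.card_eq_fintype_card]
        have hmem : (∑ g : G, (g • c - c)) ∈ coinvariantsSub G MC :=
          AddSubgroup.sum_mem _ fun g _ => AddSubgroup.subset_closure ⟨g, c, rfl⟩
        have heq : (Nat.card G) • c = -(∑ g : G, (g • c - c)) := by
          rw [hsum, hczero, zero_sub, neg_neg]
        rw [heq]
        exact AddSubgroup.neg_mem _ hmem
      -- transfer along the isomorphism `(MC)_H ≃ (MC)_G`
      have hGc' : (Nat.card G) • c ∈ coinvariantsSubOf H MC := by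
        have h1 : (QuotientAddGroup.mk ((Nat.card G) • c) :
            MC ⧸ coinvariantsSubOf H MC) = 0 := by
          apply hiso
          rw [map_zero]
          show coinvariantsOfLe H MC (QuotientAddGroup.mk _) = 0
          rw [coinvariantsOfLe]
          erw [QuotientAddGroup.map_mk]
          exact (QuotientAddGroup.eq_zero_iff _).2 hGc
        exact (QuotientAddGroup.eq_zero_iff _).1 h1
      -- push into `M`
      have hmaple : coinvariantsSubOf H MC ≤ SH.comap i := by
        refine (AddSubgroup.closure_le _).2 ?_
        rintro w ⟨γ', m', rfl⟩
        simp only [SetLike.mem_coe, AddSubgroup.mem_comap, map_sub, hiG]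
        exact AddSubgroup.subset_closure ⟨γ', i m', rfl⟩
      have hk2 : (N * (Nat.card G)) • (γ • m - m) ∈ SH := by
        have h2 : i ((Nat.card G) • c) ∈ SH := hmaple hGc'
        rwa [map_nsmul, hc, ← mul_nsmul] at h2
      refine isOfFinAddOrder_iff_nsmul_eq_zero.2
        ⟨N * Nat.card G, Nat.mul_pos hN Nat.card_pos, ?_⟩
      rw [← QuotientAddGroup.mk_nsmul]
      exact (QuotientAddGroup.eq_zero_iff _).2 hk2
    -- extend from generators to the whole closure
    have hT : coinvariantsSub G M ≤
        ((AddCommGroup.torsion (M ⧸ SH)).comap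
          (QuotientAddGroup.mk' SH)) := by
      refine (AddSubgroup.closure_le _).2 ?_
      rintro k ⟨γ, m, rfl⟩
      exact hgen γ m
    intro k hk
    exact hT hk
  intro x hx
  obtain ⟨m, rfl⟩ := QuotientAddGroup.mk_surjective x
  refine ⟨QuotientAddGroup.mk m, ?_, rfl⟩
  obtain ⟨n, hn, hnx⟩ := isOfFinAddOrder_iff_nsmul_eq_zero.1 hx
  have hnm : n • m ∈ coinvariantsSub G M := by
    apply (QuotientAddGroup.eq_zero_iff _).1
    rw [QuotientAddGroup.mk_nsmul]
    exact hnx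
  obtain ⟨l, hl, hlz⟩ := isOfFinAddOrder_iff_nsmul_eq_zero.1 (key _ hnm)
  refine isOfFinAddOrder_iff_nsmul_eq_zero.2 ⟨n * l, Nat.mul_pos hn hl, ?_⟩
  rw [mul_nsmul, ← QuotientAddGroup.mk_nsmul]
  exact hlz
end

section
/- Let δ be defined as in Subsection 4.2: for a finite group G and a short exact sequence 0 → B₁ →^i B₂ →^j B₃ → 0 of G-modules, given x₃ ∈ B₃ whose class in (B₃)_G is torsion, choose n > 0 and elements y_{3,γ} ∈ B₃ (γ ∈ G) with n·x₃ = Σ_γ (γ·y_{3,γ} - y_{3,γ}); lift x₃ to x₂ ∈ B₂ and each y_{3,γ} to y_{2,γ} ∈ B₂; then z₂ := n·x₂ - Σ_γ (γ·y_{2,γ} - y_{2,γ}) satisfies j(z₂) = 0, so z₂ = i(z₁) for a unique z₁ ∈ B₁. Then the element (1/n) ⊗ [z₁] ∈ ℚ/ℤ ⊗_ℤ (B₁)_G depends only on the class of x₃ in (B₃)_G and not on any of the choices made, so δ: ((B₃)_G)_Tors → ℚ/ℤ ⊗_ℤ (B₁)_G is a well-defined homomorphism. -/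
/-- The canonical projection `M → M_G`. -/
def Coinvariants.mk {G M : Type*} [Group G] [AddCommGroup M] [DistribMulAction G M]
    (m : M) : Coinvariants G M :=
  QuotientAddGroup.mk m

/-- Membership in `coinvariantsSub` is equivalent to being a sum `∑ γ (γ•f γ - f γ)`. -/
lemma mem_coinvariantsSub_iff {G M : Type*} [Group G] [Fintype G] [AddCommGroup M]
    [DistribMulAction G M] {m : M} :
    m ∈ coinvariantsSub G M ↔ ∃ f : G → M, m = ∑ γ : G, (γ • f γ - f γ) := by
  classical
  constructor
  · intro h
    induction h using AddSubgroup.closure_induction with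
    | mem x hx =>
      obtain ⟨γ₀, m₀, rfl⟩ := hx
      refine ⟨fun γ => if γ = γ₀ then m₀ else 0, ?_⟩
      rw [Finset.sum_eq_single γ₀ (fun b _ hb => by simp [hb]) (fun h => absurd (Finset.mem_univ γ₀) h)]
      simp
    | zero => exact ⟨0, by simp⟩
    | add x y hx hy ihx ihy =>
      obtain ⟨f, rfl⟩ := ihx; obtain ⟨g, rfl⟩ := ihy
      refine ⟨f + g, ?_⟩
      rw [← Finset.sum_add_distrib]
      refine Finset.sum_congr rfl fun γ _ => ?_
      simp [smul_add]; abel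
    | neg x hx ihx =>
      obtain ⟨f, rfl⟩ := ihx
      refine ⟨-f, ?_⟩
      rw [← Finset.sum_neg_distrib]
      refine Finset.sum_congr rfl fun γ _ => ?_
      simp only [Pi.neg_apply, smul_neg]
      abel
  · rintro ⟨f, rfl⟩
    exact AddSubgroup.sum_mem _ fun γ _ => AddSubgroup.subset_closure ⟨γ, f γ, rfl⟩

/-- `∑ τ, τ • m = 0` for `m` in `coinvariantsSub`. -/
lemma sum_smul_coinvariantsSub {G M : Type*} [Group G] [Fintype G] [AddCommGroup M]
    [DistribMulAction G M] {m : M} (h : m ∈ coinvariantsSub G M) :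
    ∑ τ : G, τ • m = 0 := by
  induction h using AddSubgroup.closure_induction with
  | mem x hx =>
    obtain ⟨γ, m₀, rfl⟩ := hx
    have : ∀ τ : G, τ • (γ • m₀ - m₀) = (τ * γ) • m₀ - τ • m₀ := by
      intro τ; rw [smul_sub, mul_smul]
    rw [Finset.sum_congr rfl fun τ _ => this τ, Finset.sum_sub_distrib, sub_eq_zero]
    exact Fintype.sum_equiv (Equiv.mulRight γ) _ _ (fun τ => rfl)
  | zero => simp
  | add x y hx hy ihx ihy =>
    simp only [smul_add, Finset.sum_add_distrib, ihx, ihy, add_zero]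
  | neg x hx ihx =>
    simp only [smul_neg, Finset.sum_neg_distrib, ihx, neg_zero]

/-- Well-definedness of the connecting homomorphism `δ` of
Subsection 4.2: for a finite group `G` and a short exact sequence
`0 → B₁ →^i B₂ →^j B₃ → 0` of `G`-modules, suppose `x₃, x₃' ∈ B₃` have the same
(torsion) class in `(B₃)_G`, and that `(n, y₃, x₂, y₂, z₁)` resp. `(n', y₃', x₂', y₂', z₁')`
are systems of choices as in the construction of `δ`:
`n > 0`, `n • x₃ = ∑_γ (γ • y₃(γ) - y₃(γ))`, `j x₂ = x₃`, `j (y₂ γ) = y₃ γ`, and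
`i z₁ = n • x₂ - ∑_γ (γ • y₂(γ) - y₂(γ))`. Then
`(1/n) ⊗ [z₁] = (1/n') ⊗ [z₁']` in `ℚ/ℤ ⊗_ℤ (B₁)_G`; hence `δ` is well defined,
depending only on the class of `x₃` and on none of the choices made. -/
theorem delta_well_defined {G : Type*} [Group G] [Fintype G]
    {B₁ B₂ B₃ : Type*}
    [AddCommGroup B₁] [DistribMulAction G B₁]
    [AddCommGroup B₂] [DistribMulAction G B₂]
    [AddCommGroup B₃] [DistribMulAction G B₃]
    (i : B₁ →+ B₂) (j : B₂ →+ B₃)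
    (hiG : ∀ (γ : G) (m : B₁), i (γ • m) = γ • i m)
    (hjG : ∀ (γ : G) (m : B₂), j (γ • m) = γ • j m)
    (hi : Function.Injective i) (hj : Function.Surjective j)
    (hex : Function.Exact i j)
    (x₃ x₃' : B₃)
    (hclass : Coinvariants.mk (G := G) x₃ = Coinvariants.mk x₃')
    (n n' : ℕ) (hn : 0 < n) (hn' : 0 < n')
    (y₃ y₃' : G → B₃) (x₂ x₂' : B₂) (y₂ y₂' : G → B₂) (z₁ z₁' : B₁)
    (hy₃ : n • x₃ = ∑ γ : G, (γ • y₃ γ - y₃ γ))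
    (hy₃' : n' • x₃' = ∑ γ : G, (γ • y₃' γ - y₃' γ))
    (hx₂ : j x₂ = x₃) (hx₂' : j x₂' = x₃')
    (hy₂ : ∀ γ : G, j (y₂ γ) = y₃ γ) (hy₂' : ∀ γ : G, j (y₂' γ) = y₃' γ)
    (hz₁ : i z₁ = n • x₂ - ∑ γ : G, (γ • y₂ γ - y₂ γ))
    (hz₁' : i z₁' = n' • x₂' - ∑ γ : G, (γ • y₂' γ - y₂' γ)) :
    (Submodule.Quotient.mk (1 / (n : ℚ)) : QmodZ) ⊗ₜ[ℤ] Coinvariants.mk (G := G) z₁ =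
      (Submodule.Quotient.mk (1 / (n' : ℚ)) : QmodZ) ⊗ₜ[ℤ] Coinvariants.mk (G := G) z₁' := by
  classical
  have hn0 : (n : ℚ) ≠ 0 := Nat.cast_ne_zero.2 hn.ne'
  have hn'0 : (n' : ℚ) ≠ 0 := Nat.cast_ne_zero.2 hn'.ne'
  set g : ℕ := Fintype.card G with hg
  have hgpos : 0 < g := Fintype.card_pos
  have hg0 : (g : ℚ) ≠ 0 := Nat.cast_ne_zero.2 hgpos.ne'
  set N : ℕ := n * n' with hN
  have hN0 : (N : ℚ) ≠ 0 := Nat.cast_ne_zero.2 (Nat.mul_ne_zero hn.ne' hn'.ne')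
  -- the difference of the two x₃'s lies in the subgroup of relations
  have hdiff : x₃ - x₃' ∈ coinvariantsSub G B₃ := by
    have h1 : -x₃ + x₃' ∈ coinvariantsSub G B₃ := (QuotientAddGroup.eq).1 hclass
    have h3 : x₃ - x₃' = -(-x₃ + x₃') := by abel
    rw [h3]
    exact neg_mem h1
  obtain ⟨t, ht⟩ := mem_coinvariantsSub_iff.1 hdiff
  choose t₂ ht₂ using fun γ => hj (t γ)
  have hw2 : j (x₂ - x₂' - ∑ γ : G, (γ • t₂ γ - t₂ γ)) = 0 := by
    rw [map_sub, map_sub, map_sum, hx₂, hx₂']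
    have h4 : ∀ γ : G, j (γ • t₂ γ - t₂ γ) = γ • t γ - t γ := fun γ => by
      rw [map_sub, hjG, ht₂]
    rw [Finset.sum_congr rfl fun γ _ => h4 γ, ← ht]
    abel
  obtain ⟨w₁, hw₁⟩ := (hex _).1 hw2
  set c : B₁ := (n' : ℤ) • z₁ - (n : ℤ) • z₁' - (N : ℤ) • w₁ with hc
  set u : G → B₂ := fun γ => (N : ℤ) • t₂ γ - (n' : ℤ) • y₂ γ + (n : ℤ) • y₂' γ with hu
  have hsmulz : ∀ (γ : G) (k : ℤ) (m : B₂), γ • (k • m) = k • (γ • m) := fun γ k m => by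
    simpa using (DistribMulAction.toAddMonoidHom B₂ γ).map_zsmul k m
  have hic : i c = ∑ γ : G, (γ • u γ - u γ) := by
    have hrhs : ∑ γ : G, (γ • u γ - u γ)
        = (N : ℤ) • (∑ γ : G, (γ • t₂ γ - t₂ γ)) - (n' : ℤ) • (∑ γ : G, (γ • y₂ γ - y₂ γ))
          + (n : ℤ) • (∑ γ : G, (γ • y₂' γ - y₂' γ)) := by
      rw [Finset.smul_sum, Finset.smul_sum, Finset.smul_sum, ← Finset.sum_sub_distrib,
        ← Finset.sum_add_distrib]
      refine Finset.sum_congr rfl fun γ _ => ?_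
      have e1 : γ • u γ = (N : ℤ) • (γ • t₂ γ) - (n' : ℤ) • (γ • y₂ γ) + (n : ℤ) • (γ • y₂' γ) := by
        simp only [hu]
        rw [smul_add, smul_sub, hsmulz, hsmulz, hsmulz]
      rw [e1]
      simp only [hu]
      generalize γ • t₂ γ = P
      generalize γ • y₂ γ = Q
      generalize γ • y₂' γ = R
      module
    rw [hrhs, hc, map_sub, map_sub, map_zsmul, map_zsmul, map_zsmul, hz₁, hz₁', hw₁]
    simp only [← natCast_zsmul]
    push_cast [hN]
    module
  have hicmem : i c ∈ coinvariantsSub G B₂ := by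
    rw [hic]; exact mem_coinvariantsSub_iff.2 ⟨u, rfl⟩
  have hsumc : ∑ τ : G, τ • c = 0 := by
    apply hi
    rw [map_zero]
    calc i (∑ τ : G, τ • c) = ∑ τ : G, τ • i c := by
          rw [map_sum]; exact Finset.sum_congr rfl fun τ _ => hiG τ c
      _ = 0 := sum_smul_coinvariantsSub hicmem
  have hgc : g • c ∈ coinvariantsSub G B₁ := by
    have h5 : g • c = -(∑ τ : G, (τ • c - c)) := by
      rw [Finset.sum_sub_distrib, hsumc, Finset.sum_const, Finset.card_univ, zero_sub, neg_neg]
    rw [h5]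
    exact neg_mem (mem_coinvariantsSub_iff.2 ⟨fun _ => c, rfl⟩)
  -- pass to the quotient
  set π : B₁ →+ Coinvariants G B₁ := QuotientAddGroup.mk' (coinvariantsSub G B₁) with hπ
  have hmk : ∀ b : B₁, Coinvariants.mk (G := G) b = π b := fun _ => rfl
  have hπc : (g : ℤ) • (π c) = 0 := by
    rw [← map_zsmul, natCast_zsmul]
    exact (QuotientAddGroup.eq_zero_iff _).2 hgc
  have hq : ∀ (k : ℕ) (r : ℚ), (k : ℤ) • (Submodule.Quotient.mk r : QmodZ)
      = Submodule.Quotient.mk ((k : ℚ) * r) := by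
    intro k r
    rw [← Submodule.Quotient.mk_smul]
    congr 1
  have hq1 : (Submodule.Quotient.mk (1 : ℚ) : QmodZ) = 0 :=
    (Submodule.Quotient.mk_eq_zero _).2 (Submodule.mem_span_singleton_self 1)
  have key₁ : (Submodule.Quotient.mk (1 / (n : ℚ)) : QmodZ) ⊗ₜ[ℤ] (π z₁)
      = (Submodule.Quotient.mk (1 / (N : ℚ)) : QmodZ) ⊗ₜ[ℤ] ((n' : ℤ) • π z₁) := by
    rw [← TensorProduct.smul_tmul, hq]
    congr 2
    rw [hN]
    push_cast
    field_simp
  have key₂ : (Submodule.Quotient.mk (1 / (n' : ℚ)) : QmodZ) ⊗ₜ[ℤ] (π z₁')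
      = (Submodule.Quotient.mk (1 / (N : ℚ)) : QmodZ) ⊗ₜ[ℤ] ((n : ℤ) • π z₁') := by
    rw [← TensorProduct.smul_tmul, hq]
    congr 2
    rw [hN]
    push_cast
    field_simp
  rw [hmk, hmk, key₁, key₂, ← sub_eq_zero, ← TensorProduct.tmul_sub]
  have hdec : (n' : ℤ) • π z₁ - (n : ℤ) • π z₁' = π c + (N : ℤ) • π w₁ := by
    rw [hc, map_sub, map_sub, map_zsmul, map_zsmul, map_zsmul]
    abel
  rw [hdec, TensorProduct.tmul_add]
  have t1 : (Submodule.Quotient.mk (1 / (N : ℚ)) : QmodZ) ⊗ₜ[ℤ] (π c) = 0 := by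
    have h6 : (Submodule.Quotient.mk (1 / (N : ℚ)) : QmodZ)
        = (g : ℤ) • (Submodule.Quotient.mk (1 / ((g * N : ℕ) : ℚ)) : QmodZ) := by
      rw [hq]
      congr 1
      push_cast
      field_simp
    rw [h6, TensorProduct.smul_tmul, hπc, TensorProduct.tmul_zero]
  have t2 : (Submodule.Quotient.mk (1 / (N : ℚ)) : QmodZ) ⊗ₜ[ℤ] ((N : ℤ) • π w₁) = 0 := by
    rw [← TensorProduct.smul_tmul, hq, mul_one_div_cancel hN0, hq1, TensorProduct.zero_tmul]
  rw [t1, t2, add_zero]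
end
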